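/- arXiv:1906.11245 — 2 statements merged into one kernel-verified Lean document; each statement's English description precedes it below -/
import Mathlib

section
/- The state space [0,1] is partitioned into n intervals I_1 = [0, 1/n] and I_j = ((j−1)/n, j/n] for j = 2, …, n, each of length 1/n. Let {μ_s}_{s∈[0,1]} be a family of Borel probability measures on [0,1] such that t ↦ μ_t(I_j) is measurable for each j and ∑_{j=1}^n |μ_s(I_j) − μ_t(I_j)| ≤ L|s − t|^α for all s, t ∈ [0,1], where L > 0 and α > 0. Fix a partition interval I' and define the aggregated transition probabilities P^{agg}(I_j | I') = n·∫_{I'} μ_t(I_j) dt. Then for every x ∈ I', ∑_{j=1}^n |μ_x(I_j) − P^{agg}(I_j | I')| ≤ L·n^{−α}. -/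
open MeasureTheory Set

/-- The partition of the state space `[0,1]` into `n` intervals:
`I 1 = [0, 1/n]` and `I j = ((j-1)/n, j/n]` for `j = 2, …, n`. -/
def part (n j : ℕ) : Set ℝ :=
  if j = 1 then Icc 0 (1 / n) else Ioc (((j : ℝ) - 1) / n) ((j : ℝ) / n)

/-- Aggregated transition probability `P^{agg}(I_j | I_i) = n·∫_{I_i} μ_t(I_j) dt`. -/
noncomputable def Pagg (n : ℕ) (μ : ℝ → Measure ℝ) (i j : ℕ) : ℝ :=
  n * ∫ t in part n i, (μ t (part n j)).toReal

lemma part_measurableSet (n j : ℕ) : MeasurableSet (part n j) := by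
  unfold part; split
  · exact measurableSet_Icc
  · exact measurableSet_Ioc

lemma part_subset {n i : ℕ} (hn : 1 ≤ n) (hi1 : 1 ≤ i) (hin : i ≤ n) :
    part n i ⊆ Icc 0 1 := by
  have npos : (0:ℝ) < n := by exact_mod_cast hn
  have hinR : (i:ℝ) ≤ n := by exact_mod_cast hin
  unfold part
  split
  · intro y hy
    refine ⟨hy.1, hy.2.trans ?_⟩
    rw [div_le_one npos]
    exact_mod_cast hn
  · intro y hy
    have h1 : (0:ℝ) ≤ ((i:ℝ) - 1) / n := by
      apply div_nonneg _ npos.le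
      have : (1:ℝ) ≤ i := by exact_mod_cast hi1
      linarith
    refine ⟨by linarith [hy.1], hy.2.trans ?_⟩
    rw [div_le_one npos]; exact hinR

lemma part_volume {n i : ℕ} (hn : 1 ≤ n) :
    volume (part n i) = ENNReal.ofReal (1 / n) := by
  unfold part
  split
  · rw [Real.volume_Icc]; norm_num
  · rw [Real.volume_Ioc]
    congr 1
    ring

lemma part_diam {n i : ℕ} {x t : ℝ} (hx : x ∈ part n i) (ht : t ∈ part n i) :
    |x - t| ≤ 1 / n := by
  unfold part at hx ht
  split at hx <;> split at ht
  all_goals try exact absurd ‹i = 1› ‹¬i = 1›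
  all_goals
  · obtain ⟨hx1, hx2⟩ := hx
    obtain ⟨ht1, ht2⟩ := ht
    have h : ((i:ℝ))/n - ((i:ℝ)-1)/n = 1/n := by ring
    rw [abs_sub_le_iff]
    constructor <;> nlinarith

/-- For a Hölder family of Borel probability measures on `[0,1]`, the transitions
out of any point `x` of a partition interval `I_i` are within `L·n^(-α)` (in the
`ℓ¹` sense over the partition) of the averaged aggregated transitions out of `I_i`. -/
theorem transition_discretization_error
    (n : ℕ) (hn : 1 ≤ n) (L α : ℝ) (hL : 0 < L) (hα : 0 < α)
    (μ : ℝ → Measure ℝ) [∀ s, IsProbabilityMeasure (μ s)]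
    (hsupp : ∀ s, μ s (Icc 0 1) = 1)
    (hmeas : ∀ j ∈ Finset.Icc 1 n, Measurable fun t => (μ t (part n j)).toReal)
    (hHolder : ∀ s ∈ Icc (0:ℝ) 1, ∀ t ∈ Icc (0:ℝ) 1,
      ∑ j ∈ Finset.Icc 1 n, |(μ s (part n j)).toReal - (μ t (part n j)).toReal|
        ≤ L * |s - t| ^ α)
    (i : ℕ) (hi : i ∈ Finset.Icc 1 n) (x : ℝ) (hx : x ∈ part n i) :
    ∑ j ∈ Finset.Icc 1 n, |(μ x (part n j)).toReal - Pagg n μ i j|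
      ≤ L * (n : ℝ) ^ (-α) := by
  obtain ⟨hi1, hin⟩ := Finset.mem_Icc.mp hi
  have npos : (0:ℝ) < n := by exact_mod_cast hn
  set S := part n i with hSdef
  have hvol : volume S = ENNReal.ofReal (1 / n) := part_volume hn
  have hfin : volume S < ⊤ := by rw [hvol]; exact ENNReal.ofReal_lt_top
  have hvolR : (volume S).toReal = 1 / n := by
    rw [hvol, ENNReal.toReal_ofReal (by positivity)]
  have hsub : S ⊆ Icc 0 1 := part_subset hn hi1 hin
  have hxI : x ∈ Icc (0:ℝ) 1 := hsub hx
  -- bound on measures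
  have hbd : ∀ t (j : ℕ), (μ t (part n j)).toReal ≤ 1 := by
    intro t j
    have := prob_le_one (μ := μ t) (s := part n j)
    exact ENNReal.toReal_le_of_le_ofReal zero_le_one (by simpa using this)
  -- integrability
  have hint : ∀ j ∈ Finset.Icc 1 n,
      IntegrableOn (fun t => (μ t (part n j)).toReal) S := by
    intro j hj
    refine Integrable.mono'
      (g := fun _ : ℝ => (1:ℝ)) (integrableOn_const hfin.ne)
      ((hmeas j hj).aestronglyMeasurable) ?_
    filter_upwards with t
    rw [Real.norm_eq_abs, abs_of_nonneg ENNReal.toReal_nonneg]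
    exact hbd t j
  have hintd : ∀ j ∈ Finset.Icc 1 n,
      IntegrableOn (fun t => |(μ x (part n j)).toReal - (μ t (part n j)).toReal|) S := by
    intro j hj
    exact ((integrableOn_const hfin.ne).sub (hint j hj)).abs
  -- key pointwise identity
  have key : ∀ j ∈ Finset.Icc 1 n, (μ x (part n j)).toReal - Pagg n μ i j
      = n * ∫ t in S, ((μ x (part n j)).toReal - (μ t (part n j)).toReal) := by
    intro j hj
    rw [integral_sub (integrableOn_const (C := (μ x (part n j)).toReal) hfin.ne) (hint j hj),
      setIntegral_const, measureReal_def, hvolR, smul_eq_mul, Pagg]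
    field_simp
    rfl
  calc ∑ j ∈ Finset.Icc 1 n, |(μ x (part n j)).toReal - Pagg n μ i j|
      ≤ ∑ j ∈ Finset.Icc 1 n,
          n * ∫ t in S, |(μ x (part n j)).toReal - (μ t (part n j)).toReal| := by
        refine Finset.sum_le_sum fun j hj => ?_
        rw [key j hj, abs_mul, abs_of_nonneg npos.le]
        gcongr
        calc |∫ t in S, ((μ x (part n j)).toReal - (μ t (part n j)).toReal)|
            ≤ ∫ t in S, |(μ x (part n j)).toReal - (μ t (part n j)).toReal| := by
              simpa [Real.norm_eq_abs] using
                norm_integral_le_integral_norm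
                  (f := fun t => (μ x (part n j)).toReal - (μ t (part n j)).toReal)
                  (μ := volume.restrict S)
          _ ≤ _ := le_refl _
    _ = n * ∫ t in S, ∑ j ∈ Finset.Icc 1 n,
          |(μ x (part n j)).toReal - (μ t (part n j)).toReal| := by
        rw [← Finset.mul_sum, integral_finset_sum _ hintd]
    _ ≤ n * ∫ t in S, L * (1 / n) ^ α := by
        refine mul_le_mul_of_nonneg_left ?_ npos.le
        refine setIntegral_mono_on (integrable_finset_sum _ hintd)
          (integrableOn_const hfin.ne) (part_measurableSet n i) ?_
        intro t ht
        refine (hHolder x hxI t (hsub ht)).trans ?_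
        gcongr
        exact part_diam hx ht
    _ = L * (n : ℝ) ^ (-α) := by
        rw [setIntegral_const, measureReal_def, hvolR, smul_eq_mul, one_div, Real.inv_rpow npos.le,
          Real.rpow_neg npos.le]
        field_simp
end

section
/- Let S = [0,1], let A be a finite nonempty set, let H ≥ 1 a natural number, L > 0, α > 0, let r : S × A → [0,1] satisfy |r(s,a) − r(s',a)| ≤ L|s − s'|^α for all s, s' ∈ S and a ∈ A, and for each (s,a) let μ_{s,a} be a Borel probability measure on S with ‖μ_{s,a} − μ_{s',a}‖_{TV} ≤ L|s − s'|^α for all s, s', a, where ‖·‖_{TV} is the total variation of the signed measure difference. Suppose measurable functions V_1, …, V_{H+1} : S → ℝ satisfy V_{H+1} ≡ 0 and V_h(s) = max_{a∈A} ( r(s,a) + ∫_S V_{h+1} dμ_{s,a} ) for 1 ≤ h ≤ H, with each V_{h+1} integrable with respect to each μ_{s,a}. Then for all 1 ≤ h ≤ H+1 and all s, s' ∈ S, |V_h(s) − V_h(s')| ≤ (1 + H − h)·L·|s − s'|^α. -/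
open MeasureTheory Set

/-- The total variation distance between two finite measures: the total variation
of the signed measure `μ − ν` evaluated on the whole space. -/
noncomputable def tvDist {X : Type*} [MeasurableSpace X]
    (μ ν : Measure X) [IsFiniteMeasure μ] [IsFiniteMeasure ν] : ℝ :=
  ((μ.toSignedMeasure - ν.toSignedMeasure).totalVariation univ).toReal

lemma tvDist_symm' {X : Type*} [MeasurableSpace X]
    (μ ν : Measure X) [IsFiniteMeasure μ] [IsFiniteMeasure ν] :
    tvDist ν μ = tvDist μ ν := by
  unfold tvDist
  rw [show ν.toSignedMeasure - μ.toSignedMeasure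
      = -(μ.toSignedMeasure - ν.toSignedMeasure) by abel,
    SignedMeasure.totalVariation_neg]

lemma measure_add_jordan' {X : Type*} [MeasurableSpace X]
    (μ ν : Measure X) [IsFiniteMeasure μ] [IsFiniteMeasure ν] :
    μ + (μ.toSignedMeasure - ν.toSignedMeasure).toJordanDecomposition.negPart
      = ν + (μ.toSignedMeasure - ν.toSignedMeasure).toJordanDecomposition.posPart := by
  set ξ := μ.toSignedMeasure - ν.toSignedMeasure with hξ
  set j := ξ.toJordanDecomposition with hj
  have hsm : j.toSignedMeasure = ξ := ξ.toSignedMeasure_toJordanDecomposition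
  ext i hi
  have h1 : ξ i = (μ i).toReal - (ν i).toReal := by
    rw [hξ, Measure.toSignedMeasure_sub_apply hi]; rfl
  have h2 : ξ i = (j.posPart i).toReal - (j.negPart i).toReal := by
    rw [← hsm, JordanDecomposition.toSignedMeasure, Measure.toSignedMeasure_sub_apply hi]; rfl
  have key : (μ i).toReal + (j.negPart i).toReal = (ν i).toReal + (j.posPart i).toReal := by
    have := h1.symm.trans h2
    linarith
  have fμ : μ i ≠ ⊤ := measure_ne_top _ _
  have fν : ν i ≠ ⊤ := measure_ne_top _ _
  have fp : j.posPart i ≠ ⊤ := measure_ne_top _ _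
  have fn : j.negPart i ≠ ⊤ := measure_ne_top _ _
  rw [Measure.add_apply, Measure.add_apply]
  rw [← ENNReal.toReal_add fμ fn, ← ENNReal.toReal_add fν fp] at key
  exact (ENNReal.toReal_eq_toReal_iff' (by finiteness) (by finiteness)).mp key

lemma integral_sub_le_tvDist' {X : Type*} [MeasurableSpace X]
    (μ ν : Measure X) [IsFiniteMeasure μ] [IsFiniteMeasure ν]
    {f : X → ℝ} (hf : Measurable f) {M : ℝ} (hM0 : 0 ≤ M)
    (h0 : ∀ x, 0 ≤ f x) (hM : ∀ x, f x ≤ M) :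
    ∫ x, f x ∂μ - ∫ x, f x ∂ν ≤ M * tvDist μ ν := by
  set ξ := μ.toSignedMeasure - ν.toSignedMeasure with hξ
  set j := ξ.toJordanDecomposition with hj
  have hint : ∀ (ρ : Measure X) [IsFiniteMeasure ρ], Integrable f ρ := by
    intro ρ _
    refine Integrable.mono' (integrable_const M) hf.aestronglyMeasurable ?_
    filter_upwards with x
    rw [Real.norm_eq_abs, abs_of_nonneg (h0 x)]; exact hM x
  have key : μ + j.negPart = ν + j.posPart := measure_add_jordan' μ ν
  have hiq : ∫ x, f x ∂μ + ∫ x, f x ∂j.negPart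
      = ∫ x, f x ∂ν + ∫ x, f x ∂j.posPart := by
    rw [← integral_add_measure (hint μ) (hint j.negPart),
      ← integral_add_measure (hint ν) (hint j.posPart), key]
  have hnn : 0 ≤ ∫ x, f x ∂j.negPart := integral_nonneg h0
  have hpos : ∫ x, f x ∂j.posPart ≤ M * (j.posPart univ).toReal := by
    calc ∫ x, f x ∂j.posPart ≤ ∫ _, M ∂j.posPart := integral_mono (hint _) (integrable_const M) hM
    _ = M * (j.posPart univ).toReal := by simp [integral_const]; simp only [Measure.real]; ring
  have htv : (j.posPart univ).toReal ≤ tvDist μ ν := by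
    unfold tvDist
    rw [← hξ, SignedMeasure.totalVariation, ← hj, Measure.add_apply]
    exact ENNReal.toReal_mono (by finiteness) le_self_add
  nlinarith [mul_le_mul_of_nonneg_left htv hM0]

lemma abs_integral_sub_le_tvDist' {X : Type*} [MeasurableSpace X]
    (μ ν : Measure X) [IsFiniteMeasure μ] [IsFiniteMeasure ν]
    {f : X → ℝ} (hf : Measurable f) {M : ℝ} (hM0 : 0 ≤ M)
    (h0 : ∀ x, 0 ≤ f x) (hM : ∀ x, f x ≤ M) :
    |∫ x, f x ∂μ - ∫ x, f x ∂ν| ≤ M * tvDist μ ν := by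
  rw [abs_sub_le_iff]
  exact ⟨integral_sub_le_tvDist' μ ν hf hM0 h0 hM,
    (tvDist_symm' μ ν ▸ integral_sub_le_tvDist' ν μ hf hM0 h0 hM : _)⟩

lemma abs_sup'_sub_sup'_le' {A : Type*} [Fintype A] [Nonempty A]
    (f g : A → ℝ) (c : ℝ) (h : ∀ a, |f a - g a| ≤ c) :
    |Finset.univ.sup' Finset.univ_nonempty f - Finset.univ.sup' Finset.univ_nonempty g| ≤ c := by
  rw [abs_sub_le_iff]
  constructor
  · rw [sub_le_iff_le_add]
    refine Finset.sup'_le _ _ (fun a _ => ?_)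
    have := (abs_le.mp (h a)).2
    have h2 : g a ≤ Finset.univ.sup' Finset.univ_nonempty g := Finset.le_sup' g (Finset.mem_univ a)
    linarith
  · rw [sub_le_iff_le_add]
    refine Finset.sup'_le _ _ (fun a _ => ?_)
    have := (abs_le.mp (h a)).1
    have h2 : f a ≤ Finset.univ.sup' Finset.univ_nonempty f := Finset.le_sup' f (Finset.mem_univ a)
    linarith

/-- If the rewards and the transition laws of a finite-horizon MDP on `S = [0,1]`
are Hölder continuous in the state (Assumptions 1 and 2), then the optimal value
functions defined by the Bellman recursion satisfy
`|V_h(s) − V_h(s')| ≤ (1 + H − h)·L·|s − s'|^α`. -/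
theorem value_function_holder {A : Type*} [Fintype A] [Nonempty A]
    (H : ℕ) (hH : 1 ≤ H) (L α : ℝ) (hL : 0 < L) (hα : 0 < α)
    (r : ℝ → A → ℝ) (hrange : ∀ s ∈ Icc (0:ℝ) 1, ∀ a : A, r s a ∈ Icc (0:ℝ) 1)
    (hrHolder : ∀ s ∈ Icc (0:ℝ) 1, ∀ s' ∈ Icc (0:ℝ) 1, ∀ a : A,
      |r s a - r s' a| ≤ L * |s - s'| ^ α)
    (μ : ℝ → A → Measure ℝ) [∀ s a, IsProbabilityMeasure (μ s a)]
    (hsupp : ∀ s a, μ s a (Icc 0 1) = 1)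
    (hμHolder : ∀ s ∈ Icc (0:ℝ) 1, ∀ s' ∈ Icc (0:ℝ) 1, ∀ a : A,
      tvDist (μ s a) (μ s' a) ≤ L * |s - s'| ^ α)
    (V : ℕ → ℝ → ℝ) (hVmeas : ∀ h, Measurable (V h))
    (hVtop : ∀ s, V (H + 1) s = 0)
    (hVint : ∀ h, 1 ≤ h → h ≤ H → ∀ s ∈ Icc (0:ℝ) 1, ∀ a : A,
      IntegrableOn (V (h + 1)) (Icc 0 1) (μ s a))
    (hBellman : ∀ h, 1 ≤ h → h ≤ H → ∀ s ∈ Icc (0:ℝ) 1,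
      V h s = Finset.univ.sup' Finset.univ_nonempty
        (fun a : A => r s a + ∫ s' in Icc (0:ℝ) 1, V (h + 1) s' ∂(μ s a))) :
    ∀ h, 1 ≤ h → h ≤ H + 1 → ∀ s ∈ Icc (0:ℝ) 1, ∀ s' ∈ Icc (0:ℝ) 1,
      |V h s - V h s'| ≤ (1 + (H : ℝ) - h) * L * |s - s'| ^ α := by
  -- value bounds by downward induction
  have hbound : ∀ d h, 1 ≤ h → h + d = H + 1 → ∀ s ∈ Icc (0:ℝ) 1,
      0 ≤ V h s ∧ V h s ≤ (d : ℝ) := by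
    intro d
    induction d with
    | zero =>
      intro h h1 hd s hs
      have : h = H + 1 := by omega
      subst this
      simp [hVtop]
    | succ d ih =>
      intro h h1 hd s hs
      have hhH : h ≤ H := by omega
      have hB := hBellman h h1 hhH s hs
      have hIb : ∀ a : A, 0 ≤ (∫ s' in Icc (0:ℝ) 1, V (h + 1) s' ∂(μ s a)) ∧
          (∫ s' in Icc (0:ℝ) 1, V (h + 1) s' ∂(μ s a)) ≤ (d : ℝ) := by
        intro a
        have hint := hVint h h1 hhH s hs a
        have hvb := ih (h + 1) (by omega) (by omega)
        constructor
        · exact setIntegral_nonneg measurableSet_Icc (fun x hx => (hvb x hx).1)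
        · calc (∫ s' in Icc (0:ℝ) 1, V (h + 1) s' ∂(μ s a))
              ≤ ∫ _ in Icc (0:ℝ) 1, (d : ℝ) ∂(μ s a) := by
                refine setIntegral_mono_on hint ((integrableOn_const_iff (by finiteness)).mpr ?_) measurableSet_Icc
                  (fun x hx => (hvb x hx).2)
                right; rw [hsupp s a]; exact ENNReal.one_lt_top
            _ = (d : ℝ) := by simp [measureReal_def, hsupp s a]
      constructor
      · rw [hB]
        obtain ⟨a⟩ := (inferInstance : Nonempty A)
        refine le_trans ?_ (Finset.le_sup' _ (Finset.mem_univ a))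
        have := (hrange s hs a).1
        have := (hIb a).1
        linarith
      · rw [hB]
        refine Finset.sup'_le _ _ (fun a _ => ?_)
        have := (hrange s hs a).2
        have := (hIb a).2
        push_cast
        linarith
  intro h h1 hle s hs s' hs'
  rcases eq_or_lt_of_le hle with heq | hlt
  · subst heq
    simp only [hVtop, sub_zero, abs_zero]
    push_cast
    rw [show (1 + (H:ℝ) - ((H:ℝ) + 1)) = 0 by ring, zero_mul, zero_mul]
  · have hhH : h ≤ H := by omega
    have hD : (0:ℝ) ≤ L * |s - s'| ^ α := by positivity
    have hM0 : (0:ℝ) ≤ ((H - h : ℕ) : ℝ) := Nat.cast_nonneg _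
    rw [hBellman h h1 hhH s hs, hBellman h h1 hhH s' hs']
    have hcast : ((H - h : ℕ) : ℝ) = (H : ℝ) - h := by
      push_cast [Nat.cast_sub hhH]; ring
    refine le_trans (abs_sup'_sub_sup'_le' _ _
      (L * |s - s'| ^ α + ((H - h : ℕ) : ℝ) * (L * |s - s'| ^ α)) (fun a => ?_)) ?_
    · -- per-action bound
      set g : ℝ → ℝ := (Icc (0:ℝ) 1).indicator (V (h + 1)) with hg
      have hgmeas : Measurable g := (hVmeas (h + 1)).indicator measurableSet_Icc
      have hvb := hbound (H - h) (h + 1) (by omega) (by omega)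
      have hg0 : ∀ x, 0 ≤ g x := by
        intro x
        rw [hg]
        by_cases hx : x ∈ Icc (0:ℝ) 1
        · rw [indicator_of_mem hx]; exact (hvb x hx).1
        · rw [indicator_of_notMem hx]
      have hgM : ∀ x, g x ≤ ((H - h : ℕ) : ℝ) := by
        intro x
        rw [hg]
        by_cases hx : x ∈ Icc (0:ℝ) 1
        · rw [indicator_of_mem hx]; exact (hvb x hx).2
        · rw [indicator_of_notMem hx]; exact hM0
      have hieq : ∀ t (ht : t ∈ Icc (0:ℝ) 1),
          (∫ x in Icc (0:ℝ) 1, V (h + 1) x ∂(μ t a)) = ∫ x, g x ∂(μ t a) := by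
        intro t ht
        rw [hg, integral_indicator measurableSet_Icc]
      have hTV := abs_integral_sub_le_tvDist' (μ s a) (μ s' a) hgmeas hM0 hg0 hgM
      have hTV2 : |(∫ x in Icc (0:ℝ) 1, V (h+1) x ∂(μ s a))
          - (∫ x in Icc (0:ℝ) 1, V (h+1) x ∂(μ s' a))|
          ≤ ((H - h : ℕ) : ℝ) * (L * |s - s'| ^ α) := by
        rw [hieq s hs, hieq s' hs']
        exact le_trans hTV (mul_le_mul_of_nonneg_left (hμHolder s hs s' hs' a) hM0)
      have hr := hrHolder s hs s' hs' a
      calc |(r s a + ∫ x in Icc (0:ℝ) 1, V (h+1) x ∂(μ s a))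
            - (r s' a + ∫ x in Icc (0:ℝ) 1, V (h+1) x ∂(μ s' a))|
          ≤ |r s a - r s' a| + |(∫ x in Icc (0:ℝ) 1, V (h+1) x ∂(μ s a))
            - (∫ x in Icc (0:ℝ) 1, V (h+1) x ∂(μ s' a))| := by
            have := abs_add_le (r s a - r s' a)
              ((∫ x in Icc (0:ℝ) 1, V (h+1) x ∂(μ s a))
                - (∫ x in Icc (0:ℝ) 1, V (h+1) x ∂(μ s' a)))
            refine le_trans (le_of_eq ?_) this
            congr 1; ring
        _ ≤ _ := add_le_add hr hTV2
    · rw [hcast]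
      nlinarith [hD]
end
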